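/- Let A be a finite local ring (not necessarily commutative) with Jacobson radical r and residue field of odd characteristic, equipped with an involution * such that a − a* ∈ r for all a ∈ A, and let m ≥ 1. For every proper *-invariant two-sided ideal I of A, the kernel of the reduction homomorphism U_{2m}(A) → U_{2m}(A/I), namely the set of matrices X ∈ M_{2m}(A) with XᴴJ₀X = J₀ and all entries of X − 1 lying in I, has cardinality |I|^{2m²−m} · |I ∩ 𝔪|^{2m}, where 𝔪 = {a ∈ r : a* = a}. -/

import Mathlib

/-!
The Cayley transform `X ↦ J₀ (1 - X) (1 + X)⁻¹` identifies the kernel with the Hermitian matrices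
with entries in `I`. A proper two-sided ideal of a local ring lies in the Jacobson radical, hence
so do the matrices over it, and since `2` is a unit `1 + X` is invertible whenever `X ≡ 1 mod I`.
Conjugating by `1 + X` and using `J₀ᴴ = -J₀`, Hermitianity of `J₀ (1 - X) (1 + X)⁻¹` becomes
`2 (J₀ - XᴴJ₀X) = 0`, and the transform is an involution. A Hermitian matrix with entries in `I` is
freely given by its `(2m choose 2)` entries above the diagonal, in `I`, and its `2m` diagonal
entries, self-adjoint elements of `I`; these lie in `𝔪` because `I` consists of non-units.
-/

open Matrix

/-- The standard symplectic matrix `J₀ ∈ M_{2m}(A)`: the 2×2 block matrix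
`[[0, I_m], [-I_m, 0]]` with `m × m` blocks. -/
def stdSymplectic (A : Type*) [Ring A] (m : ℕ) : Matrix (Fin (2 * m)) (Fin (2 * m)) A :=
  Matrix.of fun i j =>
    if (i : ℕ) + m = (j : ℕ) then (1 : A)
    else if (j : ℕ) + m = (i : ℕ) then (-1 : A) else 0

namespace TwoSidedIdeal

variable {R : Type*} [Ring R]

theorem mem_nonunits_of_ne_top {I : TwoSidedIdeal R} (hI : I ≠ ⊤) {x : R} (hx : x ∈ I) :
    x ∈ nonunits R := by
  rintro ⟨u, rfl⟩
  apply hI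
  rw [← one_mem_iff]
  simpa using I.mul_mem_left (↑u⁻¹) _ hx

theorem le_jacobson_bot_of_ne_top [IsLocalRing R] {I : TwoSidedIdeal R} (hI : I ≠ ⊤) :
    I ≤ (⊥ : TwoSidedIdeal R).jacobson := by
  intro x hx
  refine mem_jacobson_iff.mpr fun y => ?_
  have hyx : -(y * x) ∈ nonunits R :=
    mem_nonunits_of_ne_top hI (I.neg_mem (I.mul_mem_left y x hx))
  obtain ⟨u, hu⟩ : IsUnit (1 + y * x) :=
    (IsLocalRing.isUnit_or_isUnit_of_add_one (add_neg_cancel_right _ _)).resolve_right hyx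
  refine ⟨↑u⁻¹, ?_⟩
  rw [mem_bot, mul_assoc, ← mul_add_one, add_comm, ← hu, Units.inv_mul, sub_self]

theorem isUnit_one_add_of_mem_jacobson_bot [IsDedekindFiniteMonoid R] {x : R}
    (hx : x ∈ (⊥ : TwoSidedIdeal R).jacobson) : IsUnit (1 + x) := by
  obtain ⟨z, hz⟩ := mem_jacobson_iff.mp hx 1
  refine IsUnit.of_mul_eq_one_right z ?_
  rw [mem_bot, mul_one, sub_eq_zero] at hz
  rw [mul_add, mul_one, add_comm, hz]

end TwoSidedIdeal

theorem Matrix.isUnit_one_add_of_mem_matrix {A : Type*} [Ring A] [IsLocalRing A] [Finite A]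
    {n : Type*} [Fintype n] [DecidableEq n] {I : TwoSidedIdeal A} (hI : I ≠ ⊤)
    {S : Matrix n n A} (hS : S ∈ I.matrix n) : IsUnit (1 + S) := by
  apply TwoSidedIdeal.isUnit_one_add_of_mem_jacobson_bot
  rw [← TwoSidedIdeal.matrix_jacobson_bot]
  exact TwoSidedIdeal.matrix_monotone n (TwoSidedIdeal.le_jacobson_bot_of_ne_top hI) hS

theorem stdSymplectic_eq_reindex (A : Type*) [Ring A] (m : ℕ) :
    stdSymplectic A m = reindex (finSumFinEquiv.trans (finCongr (two_mul m).symm))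
      (finSumFinEquiv.trans (finCongr (two_mul m).symm)) (fromBlocks 0 1 (-1) 0) := by
  ext i j
  obtain ⟨a, rfl⟩ := (finSumFinEquiv.trans (finCongr (two_mul m).symm)).surjective i
  obtain ⟨b, rfl⟩ := (finSumFinEquiv.trans (finCongr (two_mul m).symm)).surjective j
  rcases a with a | a <;> rcases b with b | b <;>
    simp only [reindex_apply, submatrix_apply, Equiv.symm_apply_apply] <;>
    simp [stdSymplectic, one_apply, Fin.ext_iff] <;> split_ifs <;> first | rfl | omega | simp

theorem conjTranspose_stdSymplectic (A : Type*) [Ring A] [StarRing A] (m : ℕ) :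
    (stdSymplectic A m)ᴴ = -stdSymplectic A m := by
  have hB : (fromBlocks 0 1 (-1) 0 : Matrix (Fin m ⊕ Fin m) (Fin m ⊕ Fin m) A)ᴴ =
      -fromBlocks 0 1 (-1) 0 := by
    simp [fromBlocks_conjTranspose, fromBlocks_neg]
  rw [stdSymplectic_eq_reindex, conjTranspose_reindex, hB]
  rfl

theorem stdSymplectic_mul_self (A : Type*) [Ring A] (m : ℕ) :
    stdSymplectic A m * stdSymplectic A m = -1 := by
  have hB : (fromBlocks 0 1 (-1) 0 : Matrix (Fin m ⊕ Fin m) (Fin m ⊕ Fin m) A) *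
      fromBlocks 0 1 (-1) 0 = -1 := by
    simp [fromBlocks_multiply, fromBlocks_neg, ← fromBlocks_one]
  rw [stdSymplectic_eq_reindex, reindex_apply, submatrix_mul_equiv, hB, submatrix_neg,
    Pi.neg_apply, Pi.neg_apply, submatrix_one_equiv]

section Cayley

variable {R : Type*} [Ring R]

noncomputable def cayley (Y : R) : R := (1 - Y) * Ring.inverse (1 + Y)

variable {X Y : R}

theorem one_add_cayley (hY : IsUnit (1 + Y)) : 1 + cayley Y = 2 * Ring.inverse (1 + Y) := by
  have h : (1 + Y) * Ring.inverse (1 + Y) = 1 := Ring.mul_inverse_cancel _ hY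
  calc 1 + cayley Y = (1 + Y) * Ring.inverse (1 + Y) + (1 - Y) * Ring.inverse (1 + Y) := by
        rw [h, cayley]
    _ = 2 * Ring.inverse (1 + Y) := by rw [← add_mul, add_add_sub_cancel, one_add_one_eq_two]

theorem one_sub_cayley (hY : IsUnit (1 + Y)) : 1 - cayley Y = 2 * Y * Ring.inverse (1 + Y) := by
  have h : (1 + Y) * Ring.inverse (1 + Y) = 1 := Ring.mul_inverse_cancel _ hY
  calc 1 - cayley Y = (1 + Y) * Ring.inverse (1 + Y) - (1 - Y) * Ring.inverse (1 + Y) := by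
        rw [h, cayley]
    _ = 2 * Y * Ring.inverse (1 + Y) := by rw [← sub_mul, add_sub_sub_cancel, ← two_mul]

theorem isUnit_one_add_cayley (h2 : IsUnit (2 : R)) (hY : IsUnit (1 + Y)) :
    IsUnit (1 + cayley Y) := by
  rw [one_add_cayley hY]
  exact h2.mul (isUnit_ringInverse.mpr hY)

theorem cayley_cayley (h2 : IsUnit (2 : R)) (hY : IsUnit (1 + Y)) : cayley (cayley Y) = Y := by
  have hinv : Ring.inverse (2 * Ring.inverse (1 + Y)) = (1 + Y) * Ring.inverse 2 := by
    rw [Ring.mul_inverse_rev' (Commute.ofNat_left 2 _), Ring.inverse_inverse hY]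
  calc cayley (cayley Y) = 2 * Y * (Ring.inverse (1 + Y) * (1 + Y)) * Ring.inverse 2 := by
        rw [cayley, one_sub_cayley hY, one_add_cayley hY, hinv]; simp only [mul_assoc]
    _ = Y := by
        rw [Ring.inverse_mul_cancel _ hY, mul_one, (Commute.ofNat_left 2 Y).eq, mul_assoc,
          Ring.mul_inverse_cancel _ h2, mul_one]

theorem isSelfAdjoint_mul_cayley_iff [StarRing R] (h2 : IsUnit (2 : R)) {J : R}
    (hJ : star J = -J) (hX : IsUnit (1 + X)) :
    IsSelfAdjoint (J * cayley X) ↔ star X * J * X = J := by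
  rw [cayley]
  set V := Ring.inverse (1 + X)
  have hVU : V * (1 + X) = 1 := Ring.inverse_mul_cancel _ hX
  have hUV : star (1 + X) * star V = 1 := by rw [← star_mul, hVU, star_one]
  have hT : star (1 + X) * (J * ((1 - X) * V)) * (1 + X) = (1 + star X) * J * (1 - X) := by
    calc _ = star (1 + X) * J * (1 - X) * (V * (1 + X)) := by simp only [mul_assoc]
      _ = _ := by rw [hVU, mul_one, star_add, star_one]
  have hsT :
      star (1 + X) * star (J * ((1 - X) * V)) * (1 + X) = -((1 - star X) * J * (1 + X)) := by
    calc _ = star (1 + X) * star V * ((1 - star X) * star J * (1 + X)) := by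
          simp only [star_mul, star_sub, star_one, mul_assoc]
      _ = _ := by rw [hUV, one_mul, hJ]; noncomm_ring
  have key : star (1 + X) * (J * ((1 - X) * V)) * (1 + X) -
      star (1 + X) * star (J * ((1 - X) * V)) * (1 + X) = 2 * (J - star X * J * X) := by
    rw [hT, hsT]; noncomm_ring
  have hcancel (a b : R) : a = b ↔ star (1 + X) * a * (1 + X) = star (1 + X) * b * (1 + X) := by
    rw [hX.mul_left_inj, hX.star.mul_right_inj]
  rw [IsSelfAdjoint, eq_comm, hcancel, ← sub_eq_zero, key, h2.mul_right_eq_zero,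
    sub_eq_zero, eq_comm]

variable (K : TwoSidedIdeal R)

theorem isUnit_one_add_of_sub_one_mem (h2 : IsUnit (2 : R)) (hK : ∀ x ∈ K, IsUnit (1 + x))
    (hX : X - 1 ∈ K) : IsUnit (1 + X) := by
  have h : 1 + X = 2 * (1 + Ring.inverse 2 * (X - 1)) := by
    rw [mul_add, ← mul_assoc, Ring.mul_inverse_cancel _ h2]; noncomm_ring
  rw [h]
  exact h2.mul (hK _ (K.mul_mem_left _ _ hX))

theorem cayley_mem_of_sub_one_mem (hX : X - 1 ∈ K) : cayley X ∈ K := by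
  rw [cayley, ← neg_sub]
  exact K.mul_mem_right _ _ (K.neg_mem hX)

theorem cayley_sub_one_mem (hY : IsUnit (1 + Y)) (hYK : Y ∈ K) : cayley Y - 1 ∈ K := by
  rw [← neg_sub, one_sub_cayley hY]
  exact K.neg_mem (K.mul_mem_right _ _ (K.mul_mem_left _ _ hYK))

noncomputable def cayleyEquiv [StarRing R] (h2 : IsUnit (2 : R)) (hK : ∀ x ∈ K, IsUnit (1 + x))
    {J : R} (hJ : IsUnit J) (hJs : star J = -J) :
    {X : R // star X * J * X = J ∧ X - 1 ∈ K} ≃ {T : R // IsSelfAdjoint T ∧ T ∈ K} where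
  toFun X := ⟨J * cayley X.1,
    (isSelfAdjoint_mul_cayley_iff h2 hJs (isUnit_one_add_of_sub_one_mem K h2 hK X.2.2)).2 X.2.1,
    K.mul_mem_left _ _ (cayley_mem_of_sub_one_mem K X.2.2)⟩
  invFun T :=
    have hY : Ring.inverse J * T.1 ∈ K := K.mul_mem_left _ _ T.2.2
    ⟨cayley (Ring.inverse J * T.1),
      (isSelfAdjoint_mul_cayley_iff h2 hJs (isUnit_one_add_cayley h2 (hK _ hY))).1 (by
        rw [cayley_cayley h2 (hK _ hY), ← mul_assoc, Ring.mul_inverse_cancel _ hJ, one_mul]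
        exact T.2.1),
      cayley_sub_one_mem K (hK _ hY) hY⟩
  left_inv X := by
    ext
    dsimp only
    rw [← mul_assoc, Ring.inverse_mul_cancel _ hJ, one_mul,
      cayley_cayley h2 (isUnit_one_add_of_sub_one_mem K h2 hK X.2.2)]
  right_inv T := by
    ext
    dsimp only
    rw [cayley_cayley h2 (hK _ (K.mul_mem_left _ _ T.2.2)), ← mul_assoc,
      Ring.mul_inverse_cancel _ hJ, one_mul]

end Cayley

section Hermitian

variable {α : Type*} [InvolutiveStar α] {n : Type*} [LinearOrder n] (S : Set α)

def hermitianEquiv (hS : ∀ a ∈ S, star a ∈ S) :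
    {T : Matrix n n α // Tᴴ = T ∧ ∀ i j, T i j ∈ S} ≃
      ({p : n × n // p.1 < p.2} → S) × (n → {a : α // a ∈ S ∧ star a = a}) where
  toFun T :=
    (fun p => ⟨T.1 p.1.1 p.1.2, T.2.2 _ _⟩,
     fun i => ⟨T.1 i i, T.2.2 i i, by simpa using congrFun (congrFun T.2.1 i) i⟩)
  invFun f := ⟨Matrix.of fun i j =>
      if h : i < j then (f.1 ⟨(i, j), h⟩ : α)
      else if h' : j < i then star (f.1 ⟨(j, i), h'⟩ : α)
      else f.2 i, by
    constructor
    · ext i j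
      rcases lt_trichotomy i j with h | rfl | h
      · simp [h, h.not_gt]
      · simpa using (f.2 i).2.2
      · simp [h, h.not_gt]
    · intro i j
      rcases lt_trichotomy i j with h | rfl | h
      · simp [h]
      · simpa using (f.2 i).2.1
      · simpa [h, h.not_gt] using hS _ (f.1 ⟨(j, i), h⟩).2⟩
  left_inv T := by
    ext i j
    rcases lt_trichotomy i j with h | rfl | h
    · simp [h]
    · simp
    · simpa [h, h.not_gt] using congrFun (congrFun T.2.1 i) j
  right_inv f := by
    ext p
    · simp [p.2]
    · simp

theorem card_hermitian [Fintype n] (hS : ∀ a ∈ S, star a ∈ S) :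
    Nat.card {T : Matrix n n α // Tᴴ = T ∧ ∀ i j, T i j ∈ S} =
      Nat.card S ^ (Fintype.card n).choose 2 *
        Nat.card {a : α // a ∈ S ∧ star a = a} ^ Fintype.card n := by
  classical
  rw [Nat.card_congr (hermitianEquiv S hS), Nat.card_prod, Nat.card_fun, Nat.card_fun,
    Nat.card_eq_fintype_card (α := {p : n × n // p.1 < p.2}), Fintype.card_subtype,
    Fintype.card_product_filter_lt, Nat.card_eq_fintype_card (α := n)]

end Hermitian

theorem stmt13_general {A : Type*} [Ring A] [StarRing A] [IsLocalRing A] [Finite A]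
    (h2 : IsUnit (2 : A))
    {m : ℕ}
    (I : TwoSidedIdeal A) (hI : I ≠ ⊤) (hIstar : ∀ a ∈ I, star a ∈ I) :
    Nat.card {X : Matrix (Fin (2 * m)) (Fin (2 * m)) A //
        Xᴴ * stdSymplectic A m * X = stdSymplectic A m ∧ ∀ i j, (X - 1) i j ∈ I} =
      Nat.card I ^ (2 * m ^ 2 - m) *
        Nat.card {a : A // a ∈ I ∧ a ∈ nonunits A ∧ star a = a} ^ (2 * m) := by
  have h2M : IsUnit (2 : Matrix (Fin (2 * m)) (Fin (2 * m)) A) := by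
    rw [← map_ofNat (scalar (Fin (2 * m)))]
    exact h2.map _
  have hJ : IsUnit (stdSymplectic A m) :=
    IsUnit.of_mul_eq_one (-stdSymplectic A m) (by rw [mul_neg, stdSymplectic_mul_self, neg_neg])
  have hchoose : (2 * m).choose 2 = 2 * m ^ 2 - m := by
    rw [Nat.choose_two_right, mul_assoc, Nat.mul_div_cancel_left _ two_pos, Nat.mul_sub_one, sq,
      mul_left_comm]
  have hselfAdjoint (a : A) :
      a ∈ (I : Set A) ∧ star a = a ↔ a ∈ I ∧ a ∈ nonunits A ∧ star a = a :=
    and_congr_right fun ha => (and_iff_right (I.mem_nonunits_of_ne_top hI ha)).symm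
  refine (Nat.card_congr (cayleyEquiv (I.matrix _) h2M (fun _ => isUnit_one_add_of_mem_matrix hI)
    hJ (conjTranspose_stdSymplectic A m))).trans ((card_hermitian (I : Set A) hIstar).trans ?_)
  rw [Fintype.card_fin, hchoose, Nat.card_congr (Equiv.subtypeEquivRight hselfAdjoint)]
  rfl

/-- Let `A` be a finite local ring (not necessarily commutative) with Jacobson
radical `r` (= the set of non-units) and residue field of odd characteristic (equivalently,
`2` is a unit of `A`), equipped with an involution `*` such that `a - a* ∈ r` for all `a`;
let `m ≥ 1`.  For every proper `*`-invariant two-sided ideal `I` of `A`, the kernel of the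
reduction map `U_{2m}(A) → U_{2m}(A/I)`, i.e. the set of `X` with `XᴴJ₀X = J₀` and `X ≡ 1`
entrywise mod `I`, has cardinality `|I|^(2m² - m) * |I ∩ 𝔪|^(2m)` where
`𝔪 = {a ∈ r : a* = a}`. -/
theorem stmt13 {A : Type*} [Ring A] [StarRing A] [IsLocalRing A] [Finite A]
    (h2 : IsUnit (2 : A)) (hsk : ∀ a : A, a - star a ∈ nonunits A)
    {m : ℕ} (hm : 1 ≤ m)
    (I : TwoSidedIdeal A) (hI : I ≠ ⊤) (hIstar : ∀ a ∈ I, star a ∈ I) :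
    Nat.card {X : Matrix (Fin (2 * m)) (Fin (2 * m)) A //
        Xᴴ * stdSymplectic A m * X = stdSymplectic A m ∧ ∀ i j, (X - 1) i j ∈ I} =
      Nat.card I ^ (2 * m ^ 2 - m) *
        Nat.card {a : A // a ∈ I ∧ a ∈ nonunits A ∧ star a = a} ^ (2 * m) :=
  stmt13_general h2 I hI hIstar
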